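/- For the Klein–Gordon system with λ ≠ 0, the strong transparency condition fails at the resonance ξ = 0: the quotient |Π₁(ξ) B(e₁) Π₃(ξ)| / |λ₁(ξ) − 1| is unbounded as ξ → 0 on ℝ^d \ {0}; in particular there is no constant C with |Π₁(ξ) B(e₁) Π₃(ξ)| ≤ C |λ₁(ξ) − 1| for all ξ ∈ ℝ^d. The same unboundedness holds for |Π₂(ξ) B(e_{−1}) Π₃(ξ)| / |λ₂(ξ) + 1|. -/

import Mathlib

/-! Along `ξ = t • e_a` the `(v, w_a)` entry of `Π_j(ξ) B(e_{±1}) Π₃(ξ)` has modulus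
`|λ| t / (2 (d + t²))`, which is linear in `t`, while the resonance defect
`|λ_j(ξ) ∓ 1| = ⟨ξ⟩ - 1 ≤ t² / 2` is quadratic. Hence the quotient is at least
`|λ| / ((d + 1) t)`, which blows up as `t → 0⁺`. -/

noncomputable section

open Complex Matrix

abbrev KGIdx (d : ℕ) := Fin d ⊕ (Unit ⊕ Unit)

def sqn {d : ℕ} (ξ : Fin d → ℝ) : ℝ := ∑ i, ξ i ^ 2

def jap {d : ℕ} (ξ : Fin d → ℝ) : ℝ := Real.sqrt (1 + sqn ξ)

def lam1 {d : ℕ} (ξ : Fin d → ℝ) : ℝ := jap ξ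
def lam2 {d : ℕ} (ξ : Fin d → ℝ) : ℝ := -jap ξ

/-- e₁ = (0_d, −i, 1). -/
def KGe1 {d : ℕ} : KGIdx d → ℂ := fun i =>
  match i with
  | .inr (.inl _) => -Complex.I
  | .inr (.inr _) => 1
  | _ => 0

/-- e_{−1} = (0_d, i, 1). -/
def KGem1 {d : ℕ} : KGIdx d → ℂ := fun i =>
  match i with
  | .inr (.inl _) => Complex.I
  | .inr (.inr _) => 1
  | _ => 0

/-- The matrix of V ↦ B(e, V) where B((w₁,v₁,u₁),(w₂,v₂,u₂)) = −λ(0, u₁u₂, 0):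
only the (v-row, u-column) entry is nonzero, equal to −λ·e_u. -/
def KGBmat {d : ℕ} (lam : ℝ) (e : KGIdx d → ℂ) : Matrix (KGIdx d) (KGIdx d) ℂ := fun i j =>
  match i, j with
  | .inr (.inl _), .inr (.inr _) => -(lam : ℂ) * e (.inr (.inr ()))
  | _, _ => 0

def KGPi12 {d : ℕ} (l : ℝ) (ξ : Fin d → ℝ) : Matrix (KGIdx d) (KGIdx d) ℂ := fun i j =>
  (1 / 2 : ℂ) *
    match i, j with
    | .inl a, .inl b => ((ξ a * ξ b / l ^ 2 : ℝ) : ℂ)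
    | .inl a, .inr (.inl _) => ((ξ a / l : ℝ) : ℂ)
    | .inl a, .inr (.inr _) => -Complex.I * ((ξ a / l ^ 2 : ℝ) : ℂ)
    | .inr (.inl _), .inl b => ((ξ b / l : ℝ) : ℂ)
    | .inr (.inl _), .inr (.inl _) => 1
    | .inr (.inl _), .inr (.inr _) => -Complex.I * ((1 / l : ℝ) : ℂ)
    | .inr (.inr _), .inl b => Complex.I * ((ξ b / l ^ 2 : ℝ) : ℂ)
    | .inr (.inr _), .inr (.inl _) => Complex.I * ((1 / l : ℝ) : ℂ)
    | .inr (.inr _), .inr (.inr _) => ((1 / l ^ 2 : ℝ) : ℂ)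

def KGPi3 {d : ℕ} (ξ : Fin d → ℝ) : Matrix (KGIdx d) (KGIdx d) ℂ := fun i j =>
  (((d : ℝ) + sqn ξ : ℝ) : ℂ)⁻¹ *
    match i, j with
    | .inl a, .inl b => if a = b then 1 else 0
    | .inl a, .inr (.inr _) => -Complex.I * (ξ a : ℂ)
    | .inr (.inr _), .inl b => Complex.I * (ξ b : ℂ)
    | .inr (.inr _), .inr (.inr _) => ((sqn ξ : ℝ) : ℂ)
    | _, _ => 0


/-- Frobenius norm of a complex matrix. -/
def matNorm {n : Type*} [Fintype n] (M : Matrix n n ℂ) : ℝ :=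
  Real.sqrt (∑ i, ∑ j, Complex.normSq (M i j))

lemma sqn_nonneg {d : ℕ} (ξ : Fin d → ℝ) : 0 ≤ sqn ξ :=
  Finset.sum_nonneg fun _ _ => sq_nonneg _

lemma sqn_single {d : ℕ} (a : Fin d) (t : ℝ) : sqn (Pi.single a t) = t ^ 2 := by
  simp [sqn, Pi.single_apply, apply_ite (· ^ 2)]

lemma one_le_jap {d : ℕ} (ξ : Fin d → ℝ) : 1 ≤ jap ξ :=
  Real.one_le_sqrt.mpr (by linarith [sqn_nonneg ξ])

lemma one_lt_jap {d : ℕ} {ξ : Fin d → ℝ} (h : 0 < sqn ξ) : 1 < jap ξ :=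
  (Real.lt_sqrt zero_le_one).mpr (by linarith)

lemma jap_sub_one_le {d : ℕ} (ξ : Fin d → ℝ) : jap ξ - 1 ≤ sqn ξ / 2 := by
  have h : jap ξ ≤ 1 + sqn ξ / 2 :=
    (Real.sqrt_le_left (by linarith [sqn_nonneg ξ])).mpr (by nlinarith [sqn_nonneg ξ])
  linarith

lemma abs_lam1_sub_one {d : ℕ} (ξ : Fin d → ℝ) : |lam1 ξ - 1| = jap ξ - 1 :=
  abs_of_nonneg (by linarith [one_le_jap ξ, show lam1 ξ = jap ξ from rfl])

lemma abs_lam2_add_one {d : ℕ} (ξ : Fin d → ℝ) : |lam2 ξ + 1| = jap ξ - 1 := by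
  rw [lam2, abs_of_nonpos (by linarith [one_le_jap ξ])]
  ring

lemma norm_le_matNorm {n : Type*} [Fintype n] (M : Matrix n n ℂ) (i j : n) :
    ‖M i j‖ ≤ matNorm M := by
  rw [Complex.norm_def, matNorm]
  gcongr
  calc Complex.normSq (M i j) ≤ ∑ j', Complex.normSq (M i j') :=
        Finset.single_le_sum (fun _ _ => Complex.normSq_nonneg _) (Finset.mem_univ _)
    _ ≤ ∑ i', ∑ j', Complex.normSq (M i' j') :=
        Finset.single_le_sum (fun _ _ => Finset.sum_nonneg fun _ _ => Complex.normSq_nonneg _)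
          (Finset.mem_univ _)

lemma KGPi12_mul_KGBmat_mul_KGPi3_apply_inr_inl {d : ℕ} (lam l : ℝ) (ξ : Fin d → ℝ)
    (e : KGIdx d → ℂ) (a : Fin d) :
    (KGPi12 l ξ * KGBmat lam e * KGPi3 ξ) (.inr (.inl ())) (.inl a) =
      (1 / 2 : ℂ) * (-(lam : ℂ) * e (.inr (.inr ()))) *
        ((((d : ℝ) + sqn ξ : ℝ) : ℂ)⁻¹ * (Complex.I * (ξ a : ℂ))) := by
  simp [Matrix.mul_apply, Fintype.sum_sum_type, KGPi12, KGBmat, KGPi3]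

lemma norm_KGPi12_mul_KGBmat_mul_KGPi3_apply_inr_inl {d : ℕ} (lam l : ℝ) (ξ : Fin d → ℝ)
    (e : KGIdx d → ℂ) (a : Fin d) :
    ‖(KGPi12 l ξ * KGBmat lam e * KGPi3 ξ) (.inr (.inl ())) (.inl a)‖ =
      |lam| * ‖e (.inr (.inr ()))‖ * |ξ a| / (2 * ((d : ℝ) + sqn ξ)) := by
  rw [KGPi12_mul_KGBmat_mul_KGPi3_apply_inr_inl]
  simp only [norm_mul, norm_neg, norm_inv, one_div, Complex.norm_ofNat, Complex.norm_real,
    Complex.norm_I, Real.norm_eq_abs, abs_of_nonneg (add_nonneg (Nat.cast_nonneg d) (sqn_nonneg ξ))]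
  rw [div_eq_mul_inv, mul_inv]
  ring

lemma quotient_single_ge {d : ℕ} (lam l : ℝ) (e : KGIdx d → ℂ)
    (he : ‖e (.inr (.inr ()))‖ = 1) (a : Fin d) {t : ℝ} (ht0 : 0 < t) (ht1 : t ≤ 1) :
    |lam| / ((d : ℝ) + 1) * t⁻¹ ≤
      matNorm (KGPi12 l (Pi.single a t) * KGBmat lam e * KGPi3 (Pi.single a t)) /
        (jap (Pi.single a t) - 1) := by
  have hsqn := sqn_single a t
  have hnum : |lam| * t / (2 * ((d : ℝ) + 1)) ≤
      matNorm (KGPi12 l (Pi.single a t) * KGBmat lam e * KGPi3 (Pi.single a t)) := by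
    refine le_trans ?_ (norm_le_matNorm _ (.inr (.inl ())) (.inl a))
    rw [norm_KGPi12_mul_KGBmat_mul_KGPi3_apply_inr_inl, he, hsqn, Pi.single_eq_same,
      abs_of_pos ht0, mul_one]
    gcongr
    nlinarith
  have hden_pos : 0 < jap (Pi.single a t) - 1 := by
    linarith [one_lt_jap (show 0 < sqn (Pi.single a t) by rw [hsqn]; exact pow_pos ht0 2)]
  have hden : jap (Pi.single a t) - 1 ≤ t ^ 2 / 2 := hsqn ▸ jap_sub_one_le _
  calc |lam| / ((d : ℝ) + 1) * t⁻¹ = |lam| * t / (2 * ((d : ℝ) + 1)) / (t ^ 2 / 2) := by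
        field_simp
    _ ≤ _ := div_le_div₀ (le_trans (by positivity) hnum) hnum hden_pos hden

lemma exists_quotient_gt_near_zero {d : ℕ} (hd : 1 ≤ d) {lam : ℝ} (hlam : lam ≠ 0)
    (L : (Fin d → ℝ) → ℝ) (e : KGIdx d → ℂ) (he : ‖e (.inr (.inr ()))‖ = 1)
    (M δ : ℝ) (hδ : 0 < δ) :
    ∃ ξ : Fin d → ℝ, ξ ≠ 0 ∧ Real.sqrt (sqn ξ) < δ ∧
      M < matNorm (KGPi12 (L ξ) ξ * KGBmat lam e * KGPi3 ξ) / (jap ξ - 1) := by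
  have hc : 0 < |lam| / ((d : ℝ) + 1) := by positivity
  obtain ⟨t, ht0, htδ, ht1, hM⟩ : ∃ t : ℝ, 0 < t ∧ t < δ ∧ t ≤ 1 ∧ M < |lam| / ((d : ℝ) + 1) * t⁻¹ :=
    (eventually_mem_nhdsWithin.and <| eventually_nhdsWithin_of_eventually_nhds <|
      (eventually_lt_nhds hδ).and (eventually_le_nhds one_pos)).and
      ((tendsto_inv_nhdsGT_zero.const_mul_atTop hc).eventually_gt_atTop M) |>.exists.imp
      fun _ ⟨⟨h0, hlt, hle⟩, hM⟩ => ⟨h0, hlt, hle, hM⟩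
  let a : Fin d := ⟨0, hd⟩
  refine ⟨Pi.single a t, fun h => ht0.ne' (by simpa using congrFun h a), ?_, ?_⟩
  · rwa [sqn_single, Real.sqrt_sq ht0.le]
  · exact hM.trans_le (quotient_single_ge lam _ e he a ht0 ht1)

lemma not_exists_le_mul_of_forall_lt_div {α : Type*} {f g : α → ℝ} (hg : ∀ x, 0 ≤ g x)
    (h : ∀ M, ∃ x, M < f x / g x) : ¬ ∃ C, ∀ x, f x ≤ C * g x := by
  rintro ⟨C, hC⟩
  obtain ⟨x, hx⟩ := h (max C 0)
  rcases (hg x).eq_or_lt with h0 | hpos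
  · rw [← h0, div_zero] at hx
    exact (le_max_right C 0).not_gt hx
  · linarith [(div_le_iff₀ hpos).mpr (hC x), le_max_left C 0]

theorem stmt17 (d : ℕ) (hd : 1 ≤ d) (lam : ℝ) (hlam : lam ≠ 0) :
    -- unboundedness of the first quotient as ξ → 0 on ℝ^d \ {0}
    (∀ M : ℝ, ∀ δ > 0, ∃ ξ : Fin d → ℝ, ξ ≠ 0 ∧ Real.sqrt (sqn ξ) < δ ∧
      M < matNorm (KGPi12 (lam1 ξ) ξ * KGBmat lam KGe1 * KGPi3 ξ) / |lam1 ξ - 1|) ∧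
    -- in particular, no linear (strong transparency) bound
    (¬ ∃ C : ℝ, ∀ ξ : Fin d → ℝ,
      matNorm (KGPi12 (lam1 ξ) ξ * KGBmat lam KGe1 * KGPi3 ξ) ≤ C * |lam1 ξ - 1|) ∧
    -- the same unboundedness for the second quotient
    (∀ M : ℝ, ∀ δ > 0, ∃ ξ : Fin d → ℝ, ξ ≠ 0 ∧ Real.sqrt (sqn ξ) < δ ∧
      M < matNorm (KGPi12 (lam2 ξ) ξ * KGBmat lam KGem1 * KGPi3 ξ) / |lam2 ξ + 1|) ∧
    (¬ ∃ C : ℝ, ∀ ξ : Fin d → ℝ,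
      matNorm (KGPi12 (lam2 ξ) ξ * KGBmat lam KGem1 * KGPi3 ξ) ≤ C * |lam2 ξ + 1|) := by
  simp only [abs_lam1_sub_one, abs_lam2_add_one]
  have unbounded₁ := exists_quotient_gt_near_zero hd hlam lam1 KGe1 (by simp [KGe1])
  have unbounded₂ := exists_quotient_gt_near_zero hd hlam lam2 KGem1 (by simp [KGem1])
  have hjap : ∀ ξ : Fin d → ℝ, 0 ≤ jap ξ - 1 := fun ξ => sub_nonneg.mpr (one_le_jap ξ)
  exact ⟨unbounded₁,
    not_exists_le_mul_of_forall_lt_div hjap fun M => (unbounded₁ M 1 one_pos).imp fun _ h => h.2.2,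
    unbounded₂,
    not_exists_le_mul_of_forall_lt_div hjap fun M => (unbounded₂ M 1 one_pos).imp fun _ h => h.2.2⟩

end
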